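/- arXiv:2011.08986 — 2 statements merged into one kernel-verified Lean document; each statement's English description precedes it below -/
import Mathlib

section
/- Let (μ,σ) be an SDE on an open set M ⊆ ℝⁿ and let V₁ = (Y₁,C₁,τ₁,σᵀ·∇k₁) and V₂ = (Y₂,C₂,τ₂,σᵀ·∇k₂) be infinitesimal symmetries of (μ,σ) (i.e. satisfying the determining equations) whose characterizing functions k₁, k₂: M → ℝ are L-harmonic, i.e. L(k₁) = 0 and L(k₂) = 0 (Doob symmetries). Then L( Y₁(k₂) − Y₂(k₁) ) = 0, i.e. the characterizing function Y₁(k₂) − Y₂(k₁) of the bracket [V₁,V₂] is also L-harmonic; hence the bracket of two Doob symmetries is a Doob symmetry. -/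
open Matrix

/-- Partial derivative `∂ᵢ f` of a scalar function on `ℝⁿ`. -/
noncomputable def pd {n : ℕ} (i : Fin n) (f : (Fin n → ℝ) → ℝ) (x : Fin n → ℝ) : ℝ :=
  fderiv ℝ f x (Pi.single i 1)

/-- Action `Y(f) = Yⁱ ∂ᵢ f` of a vector field on a scalar function. -/
noncomputable def vfd {n : ℕ} (Y : (Fin n → ℝ) → Fin n → ℝ)
    (f : (Fin n → ℝ) → ℝ) (x : Fin n → ℝ) : ℝ :=
  ∑ j, Y x j * pd j f x

/-- Infinitesimal generator `L(f) = ½ (σσᵀ)^{ij} ∂ᵢ∂ⱼ f + μⁱ ∂ᵢ f` of the SDE `(μ,σ)`. -/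
noncomputable def gen {n m : ℕ} (μ : (Fin n → ℝ) → Fin n → ℝ)
    (σ : (Fin n → ℝ) → Matrix (Fin n) (Fin m) ℝ)
    (f : (Fin n → ℝ) → ℝ) (x : Fin n → ℝ) : ℝ :=
  (1 / 2) * ∑ i, ∑ j, (∑ α, σ x i α * σ x j α) * pd i (pd j f) x
    + ∑ i, μ x i * pd i f x

/-- Entrywise smoothness of a vector-valued function on a set. -/
def SmoothVec {n k : ℕ} (M : Set (Fin n → ℝ)) (f : (Fin n → ℝ) → Fin k → ℝ) : Prop :=
  ∀ i, ContDiffOn ℝ (⊤ : ℕ∞) (fun x => f x i) M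

/-- Entrywise smoothness of a matrix-valued function on a set. -/
def SmoothMat {n k l : ℕ} (M : Set (Fin n → ℝ))
    (f : (Fin n → ℝ) → Matrix (Fin k) (Fin l) ℝ) : Prop :=
  ∀ i j, ContDiffOn ℝ (⊤ : ℕ∞) (fun x => f x i j) M

/-- The determining equations: `V = (Y,C,τ,H)` is an infinitesimal symmetry of the SDE
`(μ,σ)` on `M`, i.e. `Y(μ) − L(Y) − σ·H + τμ = 0` and `[Y,σ] + ½τσ + σ·C = 0` on `M`. -/
def DetEqs {n m : ℕ} (M : Set (Fin n → ℝ))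
    (μ : (Fin n → ℝ) → Fin n → ℝ) (σ : (Fin n → ℝ) → Matrix (Fin n) (Fin m) ℝ)
    (Y : (Fin n → ℝ) → Fin n → ℝ) (C : (Fin n → ℝ) → Matrix (Fin m) (Fin m) ℝ)
    (τ : (Fin n → ℝ) → ℝ) (H : (Fin n → ℝ) → Fin m → ℝ) : Prop :=
  (∀ x ∈ M, ∀ i, vfd Y (fun y => μ y i) x - gen μ σ (fun y => Y y i) x
      - (∑ α, σ x i α * H x α) + τ x * μ x i = 0) ∧
  (∀ x ∈ M, ∀ i, ∀ α, vfd Y (fun y => σ y i α) x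
      - (∑ j, σ x j α * pd j (fun y => Y y i) x)
      + (1 / 2) * τ x * σ x i α + (∑ β, σ x i β * C x β α) = 0)

/-! For an infinitesimal symmetry `(Y, C, τ, H)` the determining equations give the commutator
formula `L(Y f) = Y(L f) + τ L f - ⟨H, σᵀ∇f⟩`. Expanding `L(Y f)` with the carré du champ and
differentiating `L f`, the drift equation absorbs the first-order terms, while the diffusion
equation rewrites `Y(σσᵀ)` so that it cancels the carré du champ up to `-τ σσᵀ` and `σCσᵀ`; the
latter pairs to zero with the symmetric Hessian because `C` is antisymmetric. For `L`-harmonic `k`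
and `H = σᵀ∇k'` the formula reads `L(Y k) = -⟨σᵀ∇k', σᵀ∇k⟩`, which is symmetric in `k` and `k'`,
so the two terms of `L(Y₁ k₂ - Y₂ k₁)` cancel. -/

section PartialDerivative

variable {n : ℕ} {M : Set (Fin n → ℝ)} {f g : (Fin n → ℝ) → ℝ} {x : Fin n → ℝ} {i j : Fin n}

lemma ContDiffOn.differentiableAt_of_isOpen (hf : ContDiffOn ℝ (⊤ : ℕ∞) f M) (hM : IsOpen M)
    (hx : x ∈ M) : DifferentiableAt ℝ f x :=
  (hf.differentiableOn (by simp)).differentiableAt (hM.mem_nhds hx)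

lemma ContDiffOn.pd (hf : ContDiffOn ℝ (⊤ : ℕ∞) f M) (hM : IsOpen M) :
    ContDiffOn ℝ (⊤ : ℕ∞) (pd i f) M :=
  ((hf.fderiv_of_isOpen hM (by simp)).clm_apply contDiffOn_const)

lemma pd_congr (hM : IsOpen M) (h : Set.EqOn f g M) (hx : x ∈ M) : pd i f x = pd i g x := by
  rw [pd, pd, (Filter.eventuallyEq_of_mem (hM.mem_nhds hx) h).fderiv_eq]

lemma pd_add (hf : DifferentiableAt ℝ f x) (hg : DifferentiableAt ℝ g x) :
    pd i (fun y => f y + g y) x = pd i f x + pd i g x := by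
  simp [pd, fderiv_fun_add hf hg]

lemma pd_sub (hf : DifferentiableAt ℝ f x) (hg : DifferentiableAt ℝ g x) :
    pd i (fun y => f y - g y) x = pd i f x - pd i g x := by
  simp [pd, fderiv_fun_sub hf hg]

lemma pd_mul (hf : DifferentiableAt ℝ f x) (hg : DifferentiableAt ℝ g x) :
    pd i (fun y => f y * g y) x = pd i f x * g x + f x * pd i g x := by
  simp [pd, fderiv_fun_mul hf hg]; ring

lemma pd_const_mul (c : ℝ) (hf : DifferentiableAt ℝ f x) :
    pd i (fun y => c * f y) x = c * pd i f x := by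
  simp [pd, fderiv_const_mul hf]

lemma pd_sum {ι : Type*} (s : Finset ι) {F : ι → (Fin n → ℝ) → ℝ}
    (hF : ∀ a ∈ s, DifferentiableAt ℝ (F a) x) :
    pd i (fun y => ∑ a ∈ s, F a y) x = ∑ a ∈ s, pd i (F a) x := by
  simp [pd, fderiv_fun_sum hF]

lemma pd_comm (hf : ContDiffOn ℝ (⊤ : ℕ∞) f M) (hM : IsOpen M) (hx : x ∈ M) :
    pd i (pd j f) x = pd j (pd i f) x := by
  have hfx := hf.contDiffAt (hM.mem_nhds hx)
  have hd : DifferentiableAt ℝ (fderiv ℝ f) x :=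
    (hfx.fderiv_right (m := (⊤ : ℕ∞)) le_rfl).differentiableAt (by simp)
  have hsecond (u v : Fin n) :
      pd u (pd v f) x = fderiv ℝ (fderiv ℝ f) x (Pi.single u 1) (Pi.single v 1) := by
    unfold pd
    rw [fderiv_clm_apply hd (differentiableAt_const _)]
    simp
  rw [hsecond, hsecond]
  refine hfx.isSymmSndFDerivAt ?_ _ _
  rw [minSmoothness_of_isRCLikeNormedField]
  exact WithTop.coe_le_coe.mpr le_top

end PartialDerivative

section SymmetricPairing

variable {ι : Type*} [Fintype ι] {B H : ι → ι → ℝ}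

lemma sum_sum_transpose_mul_of_symm (hH : ∀ i j, H i j = H j i) :
    ∑ i, ∑ j, B j i * H i j = ∑ i, ∑ j, B i j * H i j := by
  rw [Finset.sum_comm]
  exact Finset.sum_congr rfl fun i _ => Finset.sum_congr rfl fun j _ => by rw [hH]

lemma sum_sum_mul_eq_zero_of_antisymm_symm (hB : ∀ i j, B j i = -B i j)
    (hH : ∀ i j, H i j = H j i) : ∑ i, ∑ j, B i j * H i j = 0 := by
  have h : ∑ i, ∑ j, B j i * H i j = -∑ i, ∑ j, B i j * H i j := by
    simp only [← Finset.sum_neg_distrib, ← neg_mul, ← hB]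
  linarith [sum_sum_transpose_mul_of_symm (B := B) hH]

end SymmetricPairing

lemma half_sum_deriv_diffusion_mul_hessian {ι κ : Type*} [Fintype ι] [Fintype κ]
    (S DS : ι → κ → ℝ) (J H : ι → ι → ℝ) (C : κ → κ → ℝ) (τ : ℝ)
    (hH : ∀ i j, H i j = H j i) (hC : ∀ α β, C β α = -C α β)
    (hDS : ∀ p α, DS p α = ∑ j, S j α * J j p - 1 / 2 * τ * S p α - ∑ β, S p β * C β α) :
    1 / 2 * ∑ i, ∑ j, (∑ α, (DS i α * S j α + S i α * DS j α)) * H i j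
      = ∑ p, ∑ i, ∑ j, (∑ α, S i α * S j α) * J i p * H j p
        - τ * (1 / 2 * ∑ i, ∑ j, (∑ α, S i α * S j α) * H i j) := by
  set K : ι → ι → ℝ := fun i j => ∑ α, ∑ β, S i β * C β α * S j α
  have hsymm : ∑ i, ∑ j, (∑ α, (DS i α * S j α + S i α * DS j α)) * H i j
      = 2 * ∑ i, ∑ j, (∑ α, DS i α * S j α) * H i j := by
    have := sum_sum_transpose_mul_of_symm (B := fun i j => ∑ α, DS i α * S j α) hH
    simp only [Finset.sum_add_distrib, add_mul]
    simp only [mul_comm (S _ _) (DS _ _)]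
    linarith
  have hsubst : ∀ i j, ∑ α, DS i α * S j α
      = ∑ k, (∑ α, S k α * S j α) * J k i - 1 / 2 * τ * (∑ α, S i α * S j α) - K i j := by
    intro i j
    simp only [K, hDS, sub_mul, Finset.sum_sub_distrib, Finset.sum_mul, Finset.mul_sum]
    rw [Finset.sum_comm (s := Finset.univ (α := ι))]
    simp only [mul_comm, mul_left_comm, mul_assoc]
  have hK : ∑ i, ∑ j, K i j * H i j = 0 := by
    refine sum_sum_mul_eq_zero_of_antisymm_symm (fun i j => ?_) hH
    simp only [K]
    rw [Finset.sum_comm, ← Finset.sum_neg_distrib]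
    refine Finset.sum_congr rfl fun α _ => ?_
    rw [← Finset.sum_neg_distrib]
    refine Finset.sum_congr rfl fun β _ => ?_
    rw [hC]; ring
  have hreindex : ∑ i, ∑ j, (∑ k, (∑ α, S k α * S j α) * J k i) * H i j
      = ∑ p, ∑ i, ∑ j, (∑ α, S i α * S j α) * J i p * H j p := by
    simp only [Finset.sum_mul]
    refine Finset.sum_congr rfl fun p _ => ?_
    rw [Finset.sum_comm]
    refine Finset.sum_congr rfl fun i _ => Finset.sum_congr rfl fun j _ => ?_
    rw [hH]
  simp only [hsymm, hsubst, sub_mul, Finset.sum_sub_distrib, hreindex, hK]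
  simp only [mul_assoc, ← Finset.mul_sum]
  ring

section Generator

variable {n m : ℕ} {M : Set (Fin n → ℝ)} {μ : (Fin n → ℝ) → Fin n → ℝ}
  {σ : (Fin n → ℝ) → Matrix (Fin n) (Fin m) ℝ} {Y : (Fin n → ℝ) → Fin n → ℝ}
  {C : (Fin n → ℝ) → Matrix (Fin m) (Fin m) ℝ} {τ : (Fin n → ℝ) → ℝ}
  {H : (Fin n → ℝ) → Fin m → ℝ} {f g k : (Fin n → ℝ) → ℝ} {x : Fin n → ℝ}

noncomputable def carreDuChamp (σ : (Fin n → ℝ) → Matrix (Fin n) (Fin m) ℝ)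
    (f g : (Fin n → ℝ) → ℝ) (x : Fin n → ℝ) : ℝ :=
  ∑ i, ∑ j, (∑ α, σ x i α * σ x j α) * pd i f x * pd j g x

lemma gen_sub (hM : IsOpen M) (hf : ContDiffOn ℝ (⊤ : ℕ∞) f M)
    (hg : ContDiffOn ℝ (⊤ : ℕ∞) g M) (hx : x ∈ M) :
    gen μ σ (fun y => f y - g y) x = gen μ σ f x - gen μ σ g x := by
  have hd {h : (Fin n → ℝ) → ℝ} (hh : ContDiffOn ℝ (⊤ : ℕ∞) h M) {y} (hy : y ∈ M) :=
    hh.differentiableAt_of_isOpen hM hy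
  have hsecond (i j : Fin n) : pd i (pd j (fun y => f y - g y)) x
      = pd i (pd j f) x - pd i (pd j g) x := by
    rw [pd_congr hM (fun y hy => pd_sub (hd hf hy) (hd hg hy)) hx,
      pd_sub (hd (hf.pd hM) hx) (hd (hg.pd hM) hx)]
  simp only [gen, hsecond, pd_sub (hd hf hx) (hd hg hx), mul_sub, Finset.sum_sub_distrib]
  ring

lemma gen_sum {ι : Type*} (s : Finset ι) {F : ι → (Fin n → ℝ) → ℝ} (hM : IsOpen M)
    (hF : ∀ a ∈ s, ContDiffOn ℝ (⊤ : ℕ∞) (F a) M) (hx : x ∈ M) :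
    gen μ σ (fun y => ∑ a ∈ s, F a y) x = ∑ a ∈ s, gen μ σ (F a) x := by
  have hd {h : (Fin n → ℝ) → ℝ} (hh : ContDiffOn ℝ (⊤ : ℕ∞) h M) {y} (hy : y ∈ M) :=
    hh.differentiableAt_of_isOpen hM hy
  have hsecond (i j : Fin n) : pd i (pd j (fun y => ∑ a ∈ s, F a y)) x
      = ∑ a ∈ s, pd i (pd j (F a)) x := by
    rw [pd_congr hM (fun y hy => pd_sum s fun a ha => hd (hF a ha) hy) hx,
      pd_sum s fun a ha => hd ((hF a ha).pd hM) hx]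
  simp only [gen, hsecond, pd_sum s fun a ha => hd (hF a ha) hx, Finset.mul_sum,
    Finset.sum_add_distrib]
  simp only [Finset.sum_comm (s := s)]

lemma gen_mul (hM : IsOpen M) (hf : ContDiffOn ℝ (⊤ : ℕ∞) f M)
    (hg : ContDiffOn ℝ (⊤ : ℕ∞) g M) (hx : x ∈ M) :
    gen μ σ (fun y => f y * g y) x
      = f x * gen μ σ g x + g x * gen μ σ f x + carreDuChamp σ f g x := by
  have hd {h : (Fin n → ℝ) → ℝ} (hh : ContDiffOn ℝ (⊤ : ℕ∞) h M) {y} (hy : y ∈ M) :=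
    hh.differentiableAt_of_isOpen hM hy
  have hsecond (i j : Fin n) : pd i (pd j (fun y => f y * g y)) x
      = g x * pd i (pd j f) x + f x * pd i (pd j g) x
        + (pd i f x * pd j g x + pd j f x * pd i g x) := by
    rw [pd_congr hM (fun y hy => pd_mul (hd hf hy) (hd hg hy)) hx,
      pd_add ((hd (hf.pd hM) hx).fun_mul (hd hg hx)) ((hd hf hx).fun_mul (hd (hg.pd hM) hx)),
      pd_mul (hd (hf.pd hM) hx) (hd hg hx), pd_mul (hd hf hx) (hd (hg.pd hM) hx)]
    ring
  have hsymm : ∑ i, ∑ j, (∑ α, σ x i α * σ x j α) * (pd j f x * pd i g x)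
      = ∑ i, ∑ j, (∑ α, σ x i α * σ x j α) * (pd i f x * pd j g x) := by
    rw [Finset.sum_comm]
    refine Finset.sum_congr rfl fun i _ => Finset.sum_congr rfl fun j _ => ?_
    rw [Finset.sum_congr rfl fun α _ => mul_comm (σ x j α) (σ x i α)]
  simp only [gen, hsecond, pd_mul (hd hf hx) (hd hg hx), mul_add, Finset.sum_add_distrib]
  rw [hsymm]
  simp only [mul_comm (pd _ f x) (g x), mul_left_comm (∑ α, σ x _ α * σ x _ α) (g x),
    mul_left_comm (∑ α, σ x _ α * σ x _ α) (f x), mul_left_comm (μ x _) (g x),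
    mul_left_comm (μ x _) (f x), ← Finset.mul_sum]
  simp only [carreDuChamp, mul_assoc]
  ring

lemma contDiffOn_vfd (hY : SmoothVec M Y) (hf : ContDiffOn ℝ (⊤ : ℕ∞) f M)
    (hM : IsOpen M) : ContDiffOn ℝ (⊤ : ℕ∞) (vfd Y f) M :=
  ContDiffOn.sum fun p _ => (hY p).mul (hf.pd hM)

lemma gen_vfd (hM : IsOpen M) (hY : SmoothVec M Y) (hf : ContDiffOn ℝ (⊤ : ℕ∞) f M)
    (hx : x ∈ M) :
    gen μ σ (vfd Y f) x = ∑ p, (Y x p * gen μ σ (pd p f) x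
      + pd p f x * gen μ σ (fun y => Y y p) x + carreDuChamp σ (fun y => Y y p) (pd p f) x) := by
  rw [show vfd Y f = fun y => ∑ p, Y y p * pd p f y from rfl,
    gen_sum _ hM (fun p _ => (hY p).mul (hf.pd hM)) hx]
  exact Finset.sum_congr rfl fun p _ => gen_mul hM (hY p) (hf.pd hM) hx

lemma pd_gen (hM : IsOpen M) (hμ : SmoothVec M μ) (hσ : SmoothMat M σ)
    (hf : ContDiffOn ℝ (⊤ : ℕ∞) f M) (hx : x ∈ M) (p : Fin n) :
    pd p (gen μ σ f) x = gen μ σ (pd p f) x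
      + 1 / 2 * ∑ i, ∑ j, pd p (fun y => ∑ α, σ y i α * σ y j α) x * pd i (pd j f) x
      + ∑ i, pd p (fun y => μ y i) x * pd i f x := by
  have hμx (i) := (hμ i).differentiableAt_of_isOpen hM hx
  have hσx (i α) := (hσ i α).differentiableAt_of_isOpen hM hx
  have hf1 (i) := ((hf.pd hM (i := i)).differentiableAt_of_isOpen hM hx)
  have hf2 (i j) := (((hf.pd hM (i := j)).pd hM (i := i)).differentiableAt_of_isOpen hM hx)
  have hcomm1 (i) : pd p (pd i f) x = pd i (pd p f) x := pd_comm hf hM hx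
  have hcomm2 (i j) : pd p (pd i (pd j f)) x = pd i (pd j (pd p f)) x := by
    rw [pd_comm (hf.pd hM) hM hx, pd_congr hM (fun y hy => pd_comm hf hM hy) hx]
  unfold gen
  simp (disch := first | fun_prop | (intros; fun_prop)) only
    [pd_add, pd_const_mul, pd_sum, pd_mul]
  simp only [hcomm1, hcomm2, add_mul, Finset.sum_add_distrib, mul_add]
  ring

lemma vfd_gen (hM : IsOpen M) (hμ : SmoothVec M μ) (hσ : SmoothMat M σ)
    (hf : ContDiffOn ℝ (⊤ : ℕ∞) f M) (hx : x ∈ M) :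
    vfd Y (gen μ σ f) x = ∑ p, Y x p * gen μ σ (pd p f) x
      + 1 / 2 * ∑ i, ∑ j, vfd Y (fun y => ∑ α, σ y i α * σ y j α) x * pd i (pd j f) x
      + ∑ i, vfd Y (fun y => μ y i) x * pd i f x := by
  simp only [vfd, pd_gen hM hμ hσ hf hx, mul_add, Finset.sum_add_distrib, Finset.mul_sum,
    Finset.sum_mul]
  congr 1
  · congr 1
    rw [Finset.sum_comm]
    refine Finset.sum_congr rfl fun i _ => ?_
    rw [Finset.sum_comm]
    exact Finset.sum_congr rfl fun j _ => Finset.sum_congr rfl fun p _ => by ring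
  · rw [Finset.sum_comm]
    exact Finset.sum_congr rfl fun i _ => Finset.sum_congr rfl fun p _ => by ring

lemma vfd_diffusion (hM : IsOpen M) (hσ : SmoothMat M σ) (hx : x ∈ M) (i j : Fin n) :
    vfd Y (fun y => ∑ α, σ y i α * σ y j α) x
      = ∑ α, (vfd Y (fun y => σ y i α) x * σ x j α + σ x i α * vfd Y (fun y => σ y j α) x) := by
  have hσx (i α) := (hσ i α).differentiableAt_of_isOpen hM hx
  unfold vfd
  simp (disch := first | fun_prop | (intros; fun_prop)) only [pd_sum, pd_mul]
  simp only [mul_add, Finset.sum_add_distrib, Finset.mul_sum, Finset.sum_mul]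
  congr 1 <;> rw [Finset.sum_comm] <;>
    exact Finset.sum_congr rfl fun _ _ => Finset.sum_congr rfl fun _ _ => by ring

lemma gen_vfd_eq_of_detEqs (hM : IsOpen M) (hμ : SmoothVec M μ) (hσ : SmoothMat M σ)
    (hY : SmoothVec M Y) (hf : ContDiffOn ℝ (⊤ : ℕ∞) f M) (hC : (C x)ᵀ = -(C x))
    (hsym : DetEqs M μ σ Y C τ H) (hx : x ∈ M) :
    gen μ σ (vfd Y f) x = vfd Y (gen μ σ f) x + τ x * gen μ σ f x
      - ∑ α, H x α * ∑ p, σ x p α * pd p f x := by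
  have hdrift (p : Fin n) : gen μ σ (fun y => Y y p) x
      = vfd Y (fun y => μ y p) x - ∑ α, σ x p α * H x α + τ x * μ x p := by
    linarith [hsym.1 x hx p]
  have hdiffusion := half_sum_deriv_diffusion_mul_hessian (σ x)
    (fun p α => vfd Y (fun y => σ y p α) x) (fun j p => pd j (fun y => Y y p) x)
    (fun i j => pd i (pd j f) x) (C x) (τ x)
    (fun i j => pd_comm hf hM hx) (fun α β => by simpa using congrFun (congrFun hC α) β)
    (fun p α => by linarith [hsym.2 x hx p α])
  have hdrift_sum : ∑ p, pd p f x * gen μ σ (fun y => Y y p) x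
      = ∑ i, vfd Y (fun y => μ y i) x * pd i f x + τ x * ∑ i, μ x i * pd i f x
        - ∑ α, H x α * ∑ p, σ x p α * pd p f x := by
    simp only [hdrift, mul_add, mul_sub, Finset.sum_add_distrib, Finset.sum_sub_distrib,
      Finset.mul_sum]
    rw [Finset.sum_comm (γ := Fin m)]
    simp only [mul_comm, mul_left_comm]
    ring
  rw [gen_vfd hM hY hf hx, vfd_gen hM hμ hσ hf hx]
  simp only [vfd_diffusion hM hσ hx]
  rw [hdiffusion, Finset.sum_add_distrib, Finset.sum_add_distrib, hdrift_sum]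
  simp only [carreDuChamp, gen]
  ring

lemma gen_vfd_eq_of_detEqs_of_gen_eq_zero (hM : IsOpen M) (hμ : SmoothVec M μ)
    (hσ : SmoothMat M σ) (hY : SmoothVec M Y) (hk : ContDiffOn ℝ (⊤ : ℕ∞) k M)
    (hC : (C x)ᵀ = -(C x)) (hsym : DetEqs M μ σ Y C τ H) (hL : ∀ y ∈ M, gen μ σ k y = 0)
    (hx : x ∈ M) :
    gen μ σ (vfd Y k) x = -∑ α, H x α * ∑ p, σ x p α * pd p k x := by
  have hYL : vfd Y (gen μ σ k) x = 0 := by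
    have hpd (p : Fin n) : pd p (gen μ σ k) x = 0 := by
      rw [pd_congr hM (g := fun _ => 0) hL hx]; simp [pd]
    simp [vfd, hpd]
  rw [gen_vfd_eq_of_detEqs hM hμ hσ hY hk hC hsym hx, hYL, hL x hx]
  ring

end Generator

theorem statement11_general {n m : ℕ} (M : Set (Fin n → ℝ)) (hM : IsOpen M)
    (μ : (Fin n → ℝ) → Fin n → ℝ) (σ : (Fin n → ℝ) → Matrix (Fin n) (Fin m) ℝ)
    (hμ : SmoothVec M μ) (hσ : SmoothMat M σ)
    (Y₁ Y₂ : (Fin n → ℝ) → Fin n → ℝ)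
    (C₁ C₂ : (Fin n → ℝ) → Matrix (Fin m) (Fin m) ℝ)
    (τ₁ τ₂ : (Fin n → ℝ) → ℝ) (k₁ k₂ : (Fin n → ℝ) → ℝ)
    (hY₁ : SmoothVec M Y₁) (hY₂ : SmoothVec M Y₂)
    (hk₁ : ContDiffOn ℝ (⊤ : ℕ∞) k₁ M) (hk₂ : ContDiffOn ℝ (⊤ : ℕ∞) k₂ M)
    (hC₁ : ∀ x ∈ M, (C₁ x)ᵀ = -(C₁ x)) (hC₂ : ∀ x ∈ M, (C₂ x)ᵀ = -(C₂ x))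
    (hsym₁ : DetEqs M μ σ Y₁ C₁ τ₁ (fun x α => ∑ p, σ x p α * pd p k₁ x))
    (hsym₂ : DetEqs M μ σ Y₂ C₂ τ₂ (fun x α => ∑ p, σ x p α * pd p k₂ x))
    (hL₁ : ∀ x ∈ M, gen μ σ k₁ x = 0) (hL₂ : ∀ x ∈ M, gen μ σ k₂ x = 0) :
    ∀ x ∈ M, gen μ σ (fun y => vfd Y₁ k₂ y - vfd Y₂ k₁ y) x = 0 := by
  intro x hx
  rw [gen_sub hM (contDiffOn_vfd hY₁ hk₂ hM) (contDiffOn_vfd hY₂ hk₁ hM) hx,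
    gen_vfd_eq_of_detEqs_of_gen_eq_zero hM hμ hσ hY₁ hk₂ (hC₁ x hx) hsym₁ hL₂ hx,
    gen_vfd_eq_of_detEqs_of_gen_eq_zero hM hμ hσ hY₂ hk₁ (hC₂ x hx) hsym₂ hL₁ hx]
  rw [neg_sub_neg, sub_eq_zero]
  exact Finset.sum_congr rfl fun α _ => mul_comm _ _

/-- The bracket of two Doob symmetries is a Doob symmetry: if `V_i = (Y_i,C_i,τ_i,σᵀ∇k_i)`
are infinitesimal symmetries of `(μ,σ)` with `L(k₁) = L(k₂) = 0`, then also
`L(Y₁(k₂) − Y₂(k₁)) = 0`. -/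
theorem statement11 {n m : ℕ} (M : Set (Fin n → ℝ)) (hM : IsOpen M)
    (μ : (Fin n → ℝ) → Fin n → ℝ) (σ : (Fin n → ℝ) → Matrix (Fin n) (Fin m) ℝ)
    (hμ : SmoothVec M μ) (hσ : SmoothMat M σ)
    (Y₁ Y₂ : (Fin n → ℝ) → Fin n → ℝ)
    (C₁ C₂ : (Fin n → ℝ) → Matrix (Fin m) (Fin m) ℝ)
    (τ₁ τ₂ : (Fin n → ℝ) → ℝ) (k₁ k₂ : (Fin n → ℝ) → ℝ)
    (hY₁ : SmoothVec M Y₁) (hY₂ : SmoothVec M Y₂)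
    (hC₁s : SmoothMat M C₁) (hC₂s : SmoothMat M C₂)
    (hτ₁ : ContDiffOn ℝ (⊤ : ℕ∞) τ₁ M) (hτ₂ : ContDiffOn ℝ (⊤ : ℕ∞) τ₂ M)
    (hk₁ : ContDiffOn ℝ (⊤ : ℕ∞) k₁ M) (hk₂ : ContDiffOn ℝ (⊤ : ℕ∞) k₂ M)
    (hC₁ : ∀ x ∈ M, (C₁ x)ᵀ = -(C₁ x)) (hC₂ : ∀ x ∈ M, (C₂ x)ᵀ = -(C₂ x))
    (hsym₁ : DetEqs M μ σ Y₁ C₁ τ₁ (fun x α => ∑ p, σ x p α * pd p k₁ x))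
    (hsym₂ : DetEqs M μ σ Y₂ C₂ τ₂ (fun x α => ∑ p, σ x p α * pd p k₂ x))
    (hL₁ : ∀ x ∈ M, gen μ σ k₁ x = 0) (hL₂ : ∀ x ∈ M, gen μ σ k₂ x = 0) :
    ∀ x ∈ M, gen μ σ (fun y => vfd Y₁ k₂ y - vfd Y₂ k₁ y) x = 0 :=
  statement11_general M hM μ σ hμ hσ Y₁ Y₂ C₁ C₂ τ₁ τ₂ k₁ k₂ hY₁ hY₂ hk₁ hk₂ hC₁ hC₂ hsym₁ hsym₂ hL₁
    hL₂
end

section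
/- Let V₁ = (Y₁,C₁,τ₁,H₁), V₂ = (Y₂,C₂,τ₂,H₂) be infinitesimal stochastic transformations on an open set M ⊆ ℝⁿ and let V₃ = (Y₃,C₃,τ₃,H₃) = [V₁,V₂] be their bracket. Define, for each i, the operator Q_i(h) = Y_i(h) − (−τ_i/2 + C_i)·h acting on smooth ℝᵐ-valued functions h on M. Then the operator commutator satisfies [Q₁,Q₂] = Q₃, i.e. Q₁(Q₂(h)) − Q₂(Q₁(h)) = Q₃(h) for every smooth h: M → ℝᵐ. -/
/-!
Write `Qᵢ h = Yᵢ(h) − Aᵢ h` with `Aᵢ = −τᵢ/2 + Cᵢ`. By the Leibniz rule,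
`[Q₁,Q₂] h = [Y₁,Y₂] h − (Y₁(A₂) − Y₂(A₁) − [A₁,A₂]) h`, the second derivatives of `h` cancelling
by the symmetry of the Hessian. Since the scalar parts of `A₁`, `A₂` are central,
`Y₁(A₂) − Y₂(A₁) − [A₁,A₂] = −(Y₁(τ₂) − Y₂(τ₁))/2 + Y₁(C₂) − Y₂(C₁) − [C₁,C₂]`, which is `A₃`.
-/

open Matrix

/-- First component (`Y`-part) of the bracket of two infinitesimal stochastic
transformations: `[Y₁,Y₂]`. -/
noncomputable def brY {n : ℕ} (Y₁ Y₂ : (Fin n → ℝ) → Fin n → ℝ) (x : Fin n → ℝ) :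
    Fin n → ℝ := fun i =>
  vfd Y₁ (fun y => Y₂ y i) x - vfd Y₂ (fun y => Y₁ y i) x

/-- Second component (`C`-part) of the bracket: `Y₁(C₂) − Y₂(C₁) − (C₁C₂ − C₂C₁)`. -/
noncomputable def brC {n m : ℕ} (Y₁ Y₂ : (Fin n → ℝ) → Fin n → ℝ)
    (C₁ C₂ : (Fin n → ℝ) → Matrix (Fin m) (Fin m) ℝ) (x : Fin n → ℝ) :
    Matrix (Fin m) (Fin m) ℝ :=
  Matrix.of fun a b =>
    vfd Y₁ (fun y => C₂ y a b) x - vfd Y₂ (fun y => C₁ y a b) x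
      - ((C₁ x * C₂ x) a b - (C₂ x * C₁ x) a b)

/-- Third component (`τ`-part) of the bracket: `Y₁(τ₂) − Y₂(τ₁)`. -/
noncomputable def brTau {n : ℕ} (Y₁ Y₂ : (Fin n → ℝ) → Fin n → ℝ)
    (τ₁ τ₂ : (Fin n → ℝ) → ℝ) (x : Fin n → ℝ) : ℝ :=
  vfd Y₁ τ₂ x - vfd Y₂ τ₁ x

/-- Fourth component (`H`-part) of the bracket:
`Y₁(H₂) − Y₂(H₁) − (−τ₁/2 + C₁)·H₂ + (−τ₂/2 + C₂)·H₁`. -/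
noncomputable def brH {n m : ℕ} (Y₁ Y₂ : (Fin n → ℝ) → Fin n → ℝ)
    (C₁ C₂ : (Fin n → ℝ) → Matrix (Fin m) (Fin m) ℝ)
    (τ₁ τ₂ : (Fin n → ℝ) → ℝ)
    (H₁ H₂ : (Fin n → ℝ) → Fin m → ℝ) (x : Fin n → ℝ) : Fin m → ℝ := fun a =>
  vfd Y₁ (fun y => H₂ y a) x - vfd Y₂ (fun y => H₁ y a) x
    - ((-(τ₁ x) / 2) * H₂ x a + ∑ b, C₁ x a b * H₂ x b)
    + ((-(τ₂ x) / 2) * H₁ x a + ∑ b, C₂ x a b * H₁ x b)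

/-- The operator `Q_i(h) = Y_i(h) − (−τ_i/2 + C_i)·h` on `ℝᵐ`-valued functions. -/
noncomputable def QOp {n m : ℕ} (Y : (Fin n → ℝ) → Fin n → ℝ)
    (C : (Fin n → ℝ) → Matrix (Fin m) (Fin m) ℝ) (τ : (Fin n → ℝ) → ℝ)
    (h : (Fin n → ℝ) → Fin m → ℝ) (x : Fin n → ℝ) : Fin m → ℝ := fun a =>
  vfd Y (fun y => h y a) x - ((-(τ x) / 2) * h x a + ∑ b, C x a b * h x b)

section VectorField

variable {n : ℕ} {Y Y₁ Y₂ : (Fin n → ℝ) → Fin n → ℝ} {f g : (Fin n → ℝ) → ℝ} {x : Fin n → ℝ}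

theorem vfd_eq_fderiv (Y : (Fin n → ℝ) → Fin n → ℝ) (f : (Fin n → ℝ) → ℝ) (x : Fin n → ℝ) :
    vfd Y f x = fderiv ℝ f x (Y x) := by
  classical
  conv_rhs => rw [pi_eq_sum_univ' (Y x)]
  simp [vfd, pd, map_sum, map_smul]

theorem vfd_sub (hf : DifferentiableAt ℝ f x) (hg : DifferentiableAt ℝ g x) :
    vfd Y (fun y => f y - g y) x = vfd Y f x - vfd Y g x := by
  simp [vfd_eq_fderiv, fderiv_fun_sub hf hg]

theorem vfd_mul (hf : DifferentiableAt ℝ f x) (hg : DifferentiableAt ℝ g x) :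
    vfd Y (fun y => f y * g y) x = vfd Y f x * g x + f x * vfd Y g x := by
  simp only [vfd_eq_fderiv, fderiv_fun_mul hf hg, _root_.add_apply, _root_.smul_apply, smul_eq_mul]
  ring

theorem vfd_sum {m : ℕ} {F : (Fin n → ℝ) → Fin m → ℝ}
    (hF : ∀ b, DifferentiableAt ℝ (fun y => F y b) x) :
    vfd Y (fun y => ∑ b, F y b) x = ∑ b, vfd Y (fun y => F y b) x := by
  simp [vfd_eq_fderiv, fderiv_fun_sum fun b _ => hF b]

theorem differentiableAt_vfd (hY : DifferentiableAt ℝ Y x) (hf : ContDiffAt ℝ 2 f x) :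
    DifferentiableAt ℝ (vfd Y f) x := by
  simp only [funext (vfd_eq_fderiv Y f)]
  exact ((hf.fderiv_right (m := 1) le_rfl).differentiableAt one_ne_zero).clm_apply hY

theorem fderiv_vfd (hY : DifferentiableAt ℝ Y x) (hf : ContDiffAt ℝ 2 f x) (v : Fin n → ℝ) :
    fderiv ℝ (vfd Y f) x v =
      fderiv ℝ (fderiv ℝ f) x v (Y x) + fderiv ℝ f x (fderiv ℝ Y x v) := by
  have hf' : DifferentiableAt ℝ (fderiv ℝ f) x :=
    (hf.fderiv_right (m := 1) le_rfl).differentiableAt one_ne_zero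
  simp only [funext (vfd_eq_fderiv Y f)]
  rw [fderiv_clm_apply hf' hY]
  simp [add_comm]

theorem brY_eq_fderiv (hY₁ : DifferentiableAt ℝ Y₁ x) (hY₂ : DifferentiableAt ℝ Y₂ x) :
    brY Y₁ Y₂ x = fderiv ℝ Y₂ x (Y₁ x) - fderiv ℝ Y₁ x (Y₂ x) := by
  ext i
  simp [brY, vfd_eq_fderiv, fderiv_apply hY₁, fderiv_apply hY₂]

theorem vfd_commutator (hY₁ : DifferentiableAt ℝ Y₁ x) (hY₂ : DifferentiableAt ℝ Y₂ x)
    (hf : ContDiffAt ℝ 2 f x) :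
    vfd Y₁ (vfd Y₂ f) x - vfd Y₂ (vfd Y₁ f) x = vfd (brY Y₁ Y₂) f x := by
  have hsymm : IsSymmSndFDerivAt ℝ f x :=
    hf.isSymmSndFDerivAt (by simp [minSmoothness_of_isRCLikeNormedField])
  rw [vfd_eq_fderiv Y₁, vfd_eq_fderiv Y₂ (vfd Y₁ f), fderiv_vfd hY₂ hf, fderiv_vfd hY₁ hf,
    vfd_eq_fderiv, brY_eq_fderiv hY₁ hY₂, hsymm, map_sub]
  ring

end VectorField

section FirstOrderOperator

variable {n m : ℕ}

noncomputable def vfdVec (Y : (Fin n → ℝ) → Fin n → ℝ) (h : (Fin n → ℝ) → Fin m → ℝ)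
    (x : Fin n → ℝ) : Fin m → ℝ :=
  fun a => vfd Y (fun y => h y a) x

noncomputable def vfdMat (Y : (Fin n → ℝ) → Fin n → ℝ)
    (A : (Fin n → ℝ) → Matrix (Fin m) (Fin m) ℝ) (x : Fin n → ℝ) : Matrix (Fin m) (Fin m) ℝ :=
  Matrix.of fun a b => vfd Y (fun y => A y a b) x

noncomputable def firstOrderOp (Y : (Fin n → ℝ) → Fin n → ℝ)
    (A : (Fin n → ℝ) → Matrix (Fin m) (Fin m) ℝ) (h : (Fin n → ℝ) → Fin m → ℝ)
    (x : Fin n → ℝ) : Fin m → ℝ :=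
  vfdVec Y h x - A x *ᵥ h x

variable {Y Y₁ Y₂ Z : (Fin n → ℝ) → Fin n → ℝ} {A A₁ A₂ : (Fin n → ℝ) → Matrix (Fin m) (Fin m) ℝ}
  {h : (Fin n → ℝ) → Fin m → ℝ} {x : Fin n → ℝ}

theorem vfdVec_commutator (hY₁ : DifferentiableAt ℝ Y₁ x) (hY₂ : DifferentiableAt ℝ Y₂ x)
    (hh : ContDiffAt ℝ 2 h x) :
    vfdVec Y₁ (vfdVec Y₂ h) x - vfdVec Y₂ (vfdVec Y₁ h) x = vfdVec (brY Y₁ Y₂) h x := by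
  ext a
  exact vfd_commutator hY₁ hY₂ (contDiffAt_pi.1 hh a)

theorem vfdVec_firstOrderOp (hY : DifferentiableAt ℝ Y x)
    (hA : ∀ a b, DifferentiableAt ℝ (fun y => A y a b) x) (hh : ContDiffAt ℝ 2 h x) :
    vfdVec Z (firstOrderOp Y A h) x =
      vfdVec Z (vfdVec Y h) x - (vfdMat Z A x *ᵥ h x + A x *ᵥ vfdVec Z h x) := by
  have hh' (b : Fin m) : DifferentiableAt ℝ (fun y => h y b) x :=
    (contDiffAt_pi.1 hh b).differentiableAt two_ne_zero
  ext a
  simp only [vfdVec, firstOrderOp, vfdMat, Pi.sub_apply, Pi.add_apply, mulVec, dotProduct,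
    of_apply]
  rw [vfd_sub (differentiableAt_vfd hY (contDiffAt_pi.1 hh a))
      (DifferentiableAt.fun_sum fun b _ => (hA a b).fun_mul (hh' b)),
    vfd_sum fun b => (hA a b).fun_mul (hh' b), ← Finset.sum_add_distrib]
  exact congrArg _ (Finset.sum_congr rfl fun b _ => vfd_mul (hA a b) (hh' b))

theorem firstOrderOp_commutator (hY₁ : DifferentiableAt ℝ Y₁ x) (hY₂ : DifferentiableAt ℝ Y₂ x)
    (hA₁ : ∀ a b, DifferentiableAt ℝ (fun y => A₁ y a b) x)
    (hA₂ : ∀ a b, DifferentiableAt ℝ (fun y => A₂ y a b) x) (hh : ContDiffAt ℝ 2 h x) :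
    firstOrderOp Y₁ A₁ (firstOrderOp Y₂ A₂ h) x - firstOrderOp Y₂ A₂ (firstOrderOp Y₁ A₁ h) x =
      firstOrderOp (brY Y₁ Y₂)
        (fun y => vfdMat Y₁ A₂ y - vfdMat Y₂ A₁ y - (A₁ y * A₂ y - A₂ y * A₁ y)) h x := by
  have hcomm := vfdVec_commutator hY₁ hY₂ hh
  simp only [firstOrderOp] at hcomm ⊢
  rw [vfdVec_firstOrderOp hY₂ hA₂ hh, vfdVec_firstOrderOp hY₁ hA₁ hh, ← hcomm]
  simp only [mulVec_sub, sub_mulVec, mulVec_mulVec]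
  abel

end FirstOrderOperator

section QOperator

variable {n m : ℕ} {Y Y₁ Y₂ : (Fin n → ℝ) → Fin n → ℝ}
  {C C₁ C₂ : (Fin n → ℝ) → Matrix (Fin m) (Fin m) ℝ} {τ τ₁ τ₂ : (Fin n → ℝ) → ℝ} {x : Fin n → ℝ}

noncomputable def qMatrix (C : (Fin n → ℝ) → Matrix (Fin m) (Fin m) ℝ) (τ : (Fin n → ℝ) → ℝ)
    (x : Fin n → ℝ) : Matrix (Fin m) (Fin m) ℝ :=
  (-(τ x) / 2) • 1 + C x

theorem QOp_eq_firstOrderOp : QOp Y C τ = firstOrderOp Y (qMatrix C τ) := by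
  ext h x a
  simp only [firstOrderOp, qMatrix, add_mulVec, smul_mulVec, one_mulVec]
  rfl

theorem differentiableAt_qMatrix_apply (hτ : DifferentiableAt ℝ τ x)
    (hC : ∀ a b, DifferentiableAt ℝ (fun y => C y a b) x) (a b : Fin m) :
    DifferentiableAt ℝ (fun y => qMatrix C τ y a b) x := by
  have := hC a b
  simp only [qMatrix, Matrix.add_apply, Matrix.smul_apply, smul_eq_mul]
  fun_prop

theorem vfdMat_qMatrix (hτ : DifferentiableAt ℝ τ x)
    (hC : ∀ a b, DifferentiableAt ℝ (fun y => C y a b) x) :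
    vfdMat Y (qMatrix C τ) x = (-(vfd Y τ x) / 2) • 1 + vfdMat Y C x := by
  ext a b
  have := hC a b
  simp (disch := fun_prop) only [vfdMat, qMatrix, div_eq_mul_inv, neg_mul, neg_smul,
    Matrix.add_apply, Matrix.neg_apply, Matrix.smul_apply, smul_eq_mul, vfd_eq_fderiv,
    fderiv_fun_add, fderiv_fun_neg, fderiv_mul_const, _root_.add_apply, _root_.neg_apply,
    _root_.smul_apply, of_apply]
  ring

theorem qMatrix_commutator (C₁ C₂ : (Fin n → ℝ) → Matrix (Fin m) (Fin m) ℝ)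
    (τ₁ τ₂ : (Fin n → ℝ) → ℝ) (x : Fin n → ℝ) :
    qMatrix C₁ τ₁ x * qMatrix C₂ τ₂ x - qMatrix C₂ τ₂ x * qMatrix C₁ τ₁ x =
      C₁ x * C₂ x - C₂ x * C₁ x := by
  simp only [qMatrix, add_mul, mul_add, Matrix.smul_mul, Matrix.mul_smul, one_mul, mul_one]
  module

theorem brC_eq_vfdMat :
    brC Y₁ Y₂ C₁ C₂ x = vfdMat Y₁ C₂ x - vfdMat Y₂ C₁ x - (C₁ x * C₂ x - C₂ x * C₁ x) := by
  ext a b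
  rfl

theorem qMatrix_bracket (hτ₁ : DifferentiableAt ℝ τ₁ x) (hτ₂ : DifferentiableAt ℝ τ₂ x)
    (hC₁ : ∀ a b, DifferentiableAt ℝ (fun y => C₁ y a b) x)
    (hC₂ : ∀ a b, DifferentiableAt ℝ (fun y => C₂ y a b) x) :
    qMatrix (brC Y₁ Y₂ C₁ C₂) (brTau Y₁ Y₂ τ₁ τ₂) x =
      vfdMat Y₁ (qMatrix C₂ τ₂) x - vfdMat Y₂ (qMatrix C₁ τ₁) x
        - (qMatrix C₁ τ₁ x * qMatrix C₂ τ₂ x - qMatrix C₂ τ₂ x * qMatrix C₁ τ₁ x) := by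
  rw [qMatrix_commutator, vfdMat_qMatrix hτ₁ hC₁, vfdMat_qMatrix hτ₂ hC₂, qMatrix,
    brC_eq_vfdMat, brTau]
  module

end QOperator

theorem SmoothVec.contDiffAt {n k : ℕ} {M : Set (Fin n → ℝ)} {f : (Fin n → ℝ) → Fin k → ℝ}
    {x : Fin n → ℝ} (hf : SmoothVec M f) (hM : IsOpen M) (hx : x ∈ M) :
    ContDiffAt ℝ (⊤ : ℕ∞) f x :=
  (contDiffOn_pi.2 hf).contDiffAt (hM.mem_nhds hx)

theorem statement13_general {n m : ℕ} (M : Set (Fin n → ℝ)) (hM : IsOpen M)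
    (Y₁ Y₂ : (Fin n → ℝ) → Fin n → ℝ)
    (C₁ C₂ : (Fin n → ℝ) → Matrix (Fin m) (Fin m) ℝ)
    (τ₁ τ₂ : (Fin n → ℝ) → ℝ)
    (hY₁ : SmoothVec M Y₁) (hY₂ : SmoothVec M Y₂)
    (hC₁s : SmoothMat M C₁) (hC₂s : SmoothMat M C₂)
    (hτ₁ : ContDiffOn ℝ (⊤ : ℕ∞) τ₁ M) (hτ₂ : ContDiffOn ℝ (⊤ : ℕ∞) τ₂ M) :
    ∀ h : (Fin n → ℝ) → Fin m → ℝ, SmoothVec M h →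
      ∀ x ∈ M, ∀ a,
        QOp Y₁ C₁ τ₁ (QOp Y₂ C₂ τ₂ h) x a - QOp Y₂ C₂ τ₂ (QOp Y₁ C₁ τ₁ h) x a =
          QOp (brY Y₁ Y₂) (brC Y₁ Y₂ C₁ C₂) (brTau Y₁ Y₂ τ₁ τ₂) h x a := by
  intro h hh x hx a
  have diff {f : (Fin n → ℝ) → ℝ} (hf : ContDiffOn ℝ (⊤ : ℕ∞) f M) : DifferentiableAt ℝ f x :=
    (hf.contDiffAt (hM.mem_nhds hx)).differentiableAt (by simp)
  have hC₁ a b := diff (hC₁s a b)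
  have hC₂ a b := diff (hC₂s a b)
  suffices QOp Y₁ C₁ τ₁ (QOp Y₂ C₂ τ₂ h) x - QOp Y₂ C₂ τ₂ (QOp Y₁ C₁ τ₁ h) x =
      QOp (brY Y₁ Y₂) (brC Y₁ Y₂ C₁ C₂) (brTau Y₁ Y₂ τ₁ τ₂) h x from congrFun this a
  rw [QOp_eq_firstOrderOp, QOp_eq_firstOrderOp, QOp_eq_firstOrderOp,
    firstOrderOp_commutator ((hY₁.contDiffAt hM hx).differentiableAt (by simp))
      ((hY₂.contDiffAt hM hx).differentiableAt (by simp))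
      (differentiableAt_qMatrix_apply (diff hτ₁) hC₁)
      (differentiableAt_qMatrix_apply (diff hτ₂) hC₂)
      ((hh.contDiffAt hM hx).of_le (WithTop.coe_le_coe.2 le_top))]
  simp only [firstOrderOp, qMatrix_bracket (diff hτ₁) (diff hτ₂) hC₁ hC₂]

/-- For `V₃ = [V₁,V₂]` one has the operator identity `[Q₁,Q₂] = Q₃`. -/
theorem statement13 {n m : ℕ} (M : Set (Fin n → ℝ)) (hM : IsOpen M)
    (Y₁ Y₂ : (Fin n → ℝ) → Fin n → ℝ)
    (C₁ C₂ : (Fin n → ℝ) → Matrix (Fin m) (Fin m) ℝ)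
    (τ₁ τ₂ : (Fin n → ℝ) → ℝ) (H₁ H₂ : (Fin n → ℝ) → Fin m → ℝ)
    (hY₁ : SmoothVec M Y₁) (hY₂ : SmoothVec M Y₂)
    (hC₁s : SmoothMat M C₁) (hC₂s : SmoothMat M C₂)
    (hτ₁ : ContDiffOn ℝ (⊤ : ℕ∞) τ₁ M) (hτ₂ : ContDiffOn ℝ (⊤ : ℕ∞) τ₂ M)
    (hH₁ : SmoothVec M H₁) (hH₂ : SmoothVec M H₂)
    (hC₁ : ∀ x ∈ M, (C₁ x)ᵀ = -(C₁ x)) (hC₂ : ∀ x ∈ M, (C₂ x)ᵀ = -(C₂ x)) :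
    ∀ h : (Fin n → ℝ) → Fin m → ℝ, SmoothVec M h →
      ∀ x ∈ M, ∀ a,
        QOp Y₁ C₁ τ₁ (QOp Y₂ C₂ τ₂ h) x a - QOp Y₂ C₂ τ₂ (QOp Y₁ C₁ τ₁ h) x a =
          QOp (brY Y₁ Y₂) (brC Y₁ Y₂ C₁ C₂) (brTau Y₁ Y₂ τ₁ τ₂) h x a :=
  statement13_general M hM Y₁ Y₂ C₁ C₂ τ₁ τ₂ hY₁ hY₂ hC₁s hC₂s hτ₁ hτ₂
end
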